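/- arXiv:2010.03748 — 4 statements merged into one kernel-verified Lean document; each statement's English description precedes it below -/
import Mathlib

section
/- Let G be a finite simple connected graph of order n ≥ 2. Then AG(G) ≤ (n²/(4(n−1)))·GA(G), with equality if and only if G is isomorphic to the star K_{1,n−1}. -/
open SimpleGraph

/-- The degree of a vertex, as a natural number (classical, to avoid decidability assumptions). -/
noncomputable def ndeg {V : Type*} [Fintype V] (G : SimpleGraph V) (v : V) : ℕ :=
  letI := Classical.decRel G.Adj
  G.degree v

/-- The degree of a vertex, as a real number. -/
noncomputable def deg {V : Type*} [Fintype V] (G : SimpleGraph V) (v : V) : ℝ :=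
  (ndeg G v : ℝ)

/-- For a symmetric function `f`, `edgeSum G f = Σ_{uv ∈ E(G)} f (d_u) (d_v)`:
each unordered edge is counted twice in the double sum, hence the factor `1/2`. -/
noncomputable def edgeSum {V : Type*} [Fintype V] (G : SimpleGraph V) (f : ℝ → ℝ → ℝ) : ℝ :=
  letI := Classical.decRel G.Adj
  (1 / 2) * ∑ u : V, ∑ w : V, if G.Adj u w then f (deg G u) (deg G w) else 0

/-- The arithmetic-geometric index `AG(G) = Σ_{uv ∈ E(G)} (1/2)(√(d_u/d_v) + √(d_v/d_u))`. -/
noncomputable def AG {V : Type*} [Fintype V] (G : SimpleGraph V) : ℝ :=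
  edgeSum G (fun x y => (Real.sqrt (x / y) + Real.sqrt (y / x)) / 2)

/-- The first geometric-arithmetic index `GA(G) = Σ_{uv ∈ E(G)} 2√(d_u d_v)/(d_u + d_v)`. -/
noncomputable def GA {V : Type*} [Fintype V] (G : SimpleGraph V) : ℝ :=
  edgeSum G (fun x y => 2 * Real.sqrt (x * y) / (x + y))

/-- The forgotten index `F(G) = Σ_{uv ∈ E(G)} (d_u² + d_v²)`. -/
noncomputable def forgottenIndex {V : Type*} [Fintype V] (G : SimpleGraph V) : ℝ :=
  edgeSum G (fun x y => x ^ 2 + y ^ 2)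

/-- The first Zagreb index `M₁(G) = Σ_{uv ∈ E(G)} (d_u + d_v)`. -/
noncomputable def M1 {V : Type*} [Fintype V] (G : SimpleGraph V) : ℝ :=
  edgeSum G (fun x y => x + y)

/-- The second Zagreb index `M₂(G) = Σ_{uv ∈ E(G)} d_u d_v`. -/
noncomputable def M2 {V : Type*} [Fintype V] (G : SimpleGraph V) : ℝ :=
  edgeSum G (fun x y => x * y)

/-- The symmetric division deg index `SDD(G) = Σ_{uv ∈ E(G)} (d_u/d_v + d_v/d_u)`. -/
noncomputable def SDD {V : Type*} [Fintype V] (G : SimpleGraph V) : ℝ :=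
  edgeSum G (fun x y => x / y + y / x)

/-- The atom-bond connectivity index `ABC(G) = Σ_{uv ∈ E(G)} √((d_u + d_v − 2)/(d_u d_v))`. -/
noncomputable def ABC {V : Type*} [Fintype V] (G : SimpleGraph V) : ℝ :=
  edgeSum G (fun x y => Real.sqrt ((x + y - 2) / (x * y)))

/-- `G` is `(s,r)`-semiregular: its vertex set is the disjoint union of two nonempty sets,
all vertices of the first having degree `s` and all vertices of the second degree `r`. -/
def IsSemiregular {V : Type*} [Fintype V] (G : SimpleGraph V) (s r : ℕ) : Prop :=
  ∃ V₁ V₂ : Set V, V₁.Nonempty ∧ V₂.Nonempty ∧ Disjoint V₁ V₂ ∧ V₁ ∪ V₂ = Set.univ ∧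
    (∀ v ∈ V₁, ndeg G v = s) ∧ (∀ v ∈ V₂, ndeg G v = r)



lemma key_ineq {N x y : ℝ} (hN : 2 ≤ N) (hx1 : 1 ≤ x) (hxN : x ≤ N - 1)
    (hy1 : 1 ≤ y) (hyN : y ≤ N - 1) :
    (Real.sqrt (x / y) + Real.sqrt (y / x)) / 2 ≤
      N ^ 2 / (4 * (N - 1)) * (2 * Real.sqrt (x * y) / (x + y)) ∧
    ((Real.sqrt (x / y) + Real.sqrt (y / x)) / 2 =
      N ^ 2 / (4 * (N - 1)) * (2 * Real.sqrt (x * y) / (x + y)) ↔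
      (x = 1 ∧ y = N - 1) ∨ (y = 1 ∧ x = N - 1)) := by
  have hx0 : (0:ℝ) < x := by linarith
  have hy0 : (0:ℝ) < y := by linarith
  have ha0 : 0 < Real.sqrt x := Real.sqrt_pos.mpr hx0
  have hb0 : 0 < Real.sqrt y := Real.sqrt_pos.mpr hy0
  clear ha0 hb0
  obtain ⟨a, ha0, rfl⟩ : ∃ a : ℝ, 0 < a ∧ x = a ^ 2 :=
    ⟨_, Real.sqrt_pos.mpr hx0, (Real.sq_sqrt hx0.le).symm⟩
  obtain ⟨b, hb0, rfl⟩ : ∃ b : ℝ, 0 < b ∧ y = b ^ 2 :=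
    ⟨_, Real.sqrt_pos.mpr hy0, (Real.sq_sqrt hy0.le).symm⟩
  have e1 : Real.sqrt (a ^ 2 / b ^ 2) = a / b := by
    rw [← div_pow, Real.sqrt_sq (by positivity)]
  have e2 : Real.sqrt (b ^ 2 / a ^ 2) = b / a := by
    rw [← div_pow, Real.sqrt_sq (by positivity)]
  have e3 : Real.sqrt (a ^ 2 * b ^ 2) = a * b := by
    rw [← mul_pow, Real.sqrt_sq (by positivity)]
  rw [e1, e2, e3]
  clear e1 e2 e3 hx0 hy0
  have hN1 : (0:ℝ) < N - 1 := by linarith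
  have hD : (0:ℝ) < 2 * (N - 1) * a * b * (a ^ 2 + b ^ 2) := by positivity
  have hEq : N ^ 2 / (4 * (N - 1)) * (2 * (a * b) / (a ^ 2 + b ^ 2)) - (a / b + b / a) / 2
      = ((N - 1) * a ^ 2 - b ^ 2) * ((N - 1) * b ^ 2 - a ^ 2)
        / (2 * (N - 1) * a * b * (a ^ 2 + b ^ 2)) := by
    field_simp
    ring
  have f1 : 0 ≤ (N - 1) * a ^ 2 - b ^ 2 := by nlinarith
  have f2 : 0 ≤ (N - 1) * b ^ 2 - a ^ 2 := by nlinarith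
  have hg : 0 ≤ ((N - 1) * a ^ 2 - b ^ 2) * ((N - 1) * b ^ 2 - a ^ 2) := mul_nonneg f1 f2
  constructor
  · nlinarith [div_nonneg hg hD.le]
  · rw [eq_comm, ← sub_eq_zero, hEq, div_eq_zero_iff]
    constructor
    · rintro (h | h)
      · rcases mul_eq_zero.mp h with h' | h'
        · left
          have ha1 : a ^ 2 = 1 := by nlinarith
          have hb2 : b ^ 2 = N - 1 := by nlinarith
          exact ⟨ha1, hb2⟩
        · right
          have hb1 : b ^ 2 = 1 := by nlinarith
          have ha2 : a ^ 2 = N - 1 := by nlinarith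
          exact ⟨hb1, ha2⟩
      · exact absurd h hD.ne'
    · rintro (⟨h1', h2'⟩ | ⟨h1', h2'⟩) <;> left <;> rw [h1', h2'] <;> ring

section Aux
variable {V : Type*} [Fintype V] {G : SimpleGraph V} {v0 u w : V}

lemma star_ndeg_hub
    (hstar : ∀ u w, G.Adj u w ↔ (u = v0 ∧ w ≠ v0) ∨ (w = v0 ∧ u ≠ v0)) :
    ndeg G v0 = Fintype.card V - 1 := by
  letI := Classical.decEq V
  letI := Classical.decRel G.Adj
  show G.degree v0 = _
  have h : G.neighborFinset v0 = Finset.univ.erase v0 := by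
    ext w
    simp [SimpleGraph.mem_neighborFinset, hstar v0 w, Finset.mem_erase, ne_comm]
  show (G.neighborFinset v0).card = _
  rw [h, Finset.card_erase_of_mem (Finset.mem_univ _), Finset.card_univ]

lemma star_ndeg_leaf
    (hstar : ∀ u w, G.Adj u w ↔ (u = v0 ∧ w ≠ v0) ∨ (w = v0 ∧ u ≠ v0))
    (hw : w ≠ v0) : ndeg G w = 1 := by
  letI := Classical.decEq V
  letI := Classical.decRel G.Adj
  show G.degree w = 1
  have h : G.neighborFinset w = {v0} := by
    ext u
    simp only [SimpleGraph.mem_neighborFinset, hstar w u, Finset.mem_singleton]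
    constructor
    · rintro (⟨h1, -⟩ | ⟨h1, -⟩)
      · exact absurd h1 hw
      · exact h1
    · rintro rfl
      exact Or.inr ⟨rfl, hw⟩
  show (G.neighborFinset w).card = _
  rw [h, Finset.card_singleton]

lemma deg_one_le (h : G.Adj u w) : 1 ≤ deg G u := by
  letI := Classical.decEq V
  letI := Classical.decRel G.Adj
  have h1 : 0 < G.degree u := (G.degree_pos_iff_exists_adj u).mpr ⟨w, h⟩
  have : (1 : ℕ) ≤ ndeg G u := h1
  unfold deg; exact_mod_cast this

lemma deg_le_card : deg G u ≤ (Fintype.card V : ℝ) - 1 := by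
  letI := Classical.decEq V
  letI := Classical.decRel G.Adj
  have h2 : G.degree u < Fintype.card V := G.degree_lt_card_verts u
  have : (ndeg G u : ℝ) + 1 ≤ (Fintype.card V : ℝ) := by exact_mod_cast h2
  unfold deg; linarith

end Aux

section Iso
variable {V : Type*} [Fintype V] {G : SimpleGraph V} {v0 : V}

lemma star_iso (n : ℕ) (hn : Fintype.card V = n)
    (hstar : ∀ u w, G.Adj u w ↔ (u = v0 ∧ w ≠ v0) ∨ (w = v0 ∧ u ≠ v0)) :
    Nonempty (G ≃g completeBipartiteGraph (Fin 1) (Fin (n - 1))) := by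
  classical
  have hcard : Fintype.card {w : V // w ≠ v0} = n - 1 := by
    rw [Fintype.card_subtype_compl, Fintype.card_subtype_eq, hn]
  let e2 : {w : V // w ≠ v0} ≃ Fin (n - 1) := Fintype.equivFinOfCardEq hcard
  let e1 : Fin 1 ≃ {w : V // w = v0} :=
    { toFun := fun _ => ⟨v0, rfl⟩
      invFun := fun _ => 0
      left_inv := fun i => Subsingleton.elim _ _
      right_inv := fun x => Subtype.ext x.2.symm }
  let e : (Fin 1 ⊕ Fin (n - 1)) ≃ V :=
    (Equiv.sumCongr e1 e2.symm).trans (Equiv.sumCompl (· = v0))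
  have he1 : ∀ i : Fin 1, e (Sum.inl i) = v0 := fun i => rfl
  have he2 : ∀ j : Fin (n - 1), e (Sum.inr j) = (e2.symm j : V) := fun j => rfl
  refine ⟨SimpleGraph.Iso.symm ⟨e, ?_⟩⟩
  rintro (i | i) (j | j)
  · simp only [he1, hstar, completeBipartiteGraph_adj]
    simp
  · simp only [he1, he2, hstar, completeBipartiteGraph_adj]
    simp [(e2.symm j).2]
  · simp only [he1, he2, hstar, completeBipartiteGraph_adj]
    simp [(e2.symm i).2]
  · simp only [he2, hstar, completeBipartiteGraph_adj]
    simp [(e2.symm i).2, (e2.symm j).2]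

lemma iso_star (φ : G ≃g completeBipartiteGraph (Fin 1) (Fin m)) :
    ∃ v0 : V, ∀ u w, G.Adj u w ↔ (u = v0 ∧ w ≠ v0) ∨ (w = v0 ∧ u ≠ v0) := by
  refine ⟨φ.symm (Sum.inl 0), fun u w => ?_⟩
  set v0 := φ.symm (Sum.inl 0) with hv0
  have key : ∀ x : V, φ x = Sum.inl 0 ↔ x = v0 := by
    intro x
    constructor
    · intro h
      have := congrArg φ.symm h
      simpa using this
    · rintro rfl
      simp [hv0]
  rw [← φ.map_rel_iff]
  rcases hu : φ u with i | i <;> rcases hw : φ w with j | j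
  · have hu' : u = v0 := (key u).mp (by rw [hu]; congr; exact Subsingleton.elim _ _)
    have hw' : w = v0 := (key w).mp (by rw [hw]; congr; exact Subsingleton.elim _ _)
    simp [hu', hw']
  · have hu' : u = v0 := (key u).mp (by rw [hu]; congr; exact Subsingleton.elim _ _)
    have hw' : w ≠ v0 := fun h => by rw [← key w, hw] at h; exact absurd h (by simp)
    simp [hu', hw']
  · have hu' : u ≠ v0 := fun h => by rw [← key u, hu] at h; exact absurd h (by simp)
    have hw' : w = v0 := (key w).mp (by rw [hw]; congr; exact Subsingleton.elim _ _)
    simp [hu', hw']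
  · have hu' : u ≠ v0 := fun h => by rw [← key u, hu] at h; exact absurd h (by simp)
    have hw' : w ≠ v0 := fun h => by rw [← key w, hw] at h; exact absurd h (by simp)
    simp [hu', hw']

end Iso

section P
variable {V : Type*} [Fintype V] {G : SimpleGraph V}

lemma P_star (hG : G.Connected) (n : ℕ) (hn : Fintype.card V = n) (hn2 : 2 ≤ n)
    (hP : ∀ u w, G.Adj u w →
      (deg G u = 1 ∧ deg G w = (n : ℝ) - 1) ∨ (deg G w = 1 ∧ deg G u = (n : ℝ) - 1)) :
    ∃ v0 : V, ∀ u w, G.Adj u w ↔ (u = v0 ∧ w ≠ v0) ∨ (w = v0 ∧ u ≠ v0) := by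
  letI := Classical.decEq V
  letI := Classical.decRel G.Adj
  have hcast : ((n - 1 : ℕ) : ℝ) = (n : ℝ) - 1 := by
    have h1 : 1 ≤ n := by omega
    push_cast [h1]
    ring
  have hdeg_iff : ∀ v : V, deg G v = (n : ℝ) - 1 ↔ ndeg G v = n - 1 := by
    intro v
    rw [deg, ← hcast, Nat.cast_inj]
  have hdeg1_iff : ∀ v : V, deg G v = 1 ↔ ndeg G v = 1 := by
    intro v
    rw [deg, show (1:ℝ) = ((1:ℕ):ℝ) by norm_num, Nat.cast_inj]
  -- there exists an edge
  obtain ⟨u, w, huw⟩ : ∃ u w : V, G.Adj u w := by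
    have : 1 < Fintype.card V := by omega
    obtain ⟨u, w, hne⟩ := Fintype.exists_pair_of_one_lt_card this
    obtain ⟨p⟩ := hG.preconnected u w
    cases p with
    | nil => exact absurd rfl hne
    | cons h _ => exact ⟨_, _, h⟩
  -- get a hub
  obtain ⟨v0, hv0⟩ : ∃ v0 : V, ndeg G v0 = n - 1 := by
    rcases hP u w huw with ⟨-, h2⟩ | ⟨-, h2⟩
    · exact ⟨w, (hdeg_iff w).mp h2⟩
    · exact ⟨u, (hdeg_iff u).mp h2⟩
  -- the hub is adjacent to everything else
  have hadj : ∀ w : V, G.Adj v0 w ↔ w ≠ v0 := by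
    have hsub : G.neighborFinset v0 ⊆ Finset.univ.erase v0 := by
      intro x hx
      exact Finset.mem_erase.mpr ⟨(G.ne_of_adj ((G.mem_neighborFinset _ _).mp hx)).symm,
        Finset.mem_univ x⟩
    have hcards : (Finset.univ.erase v0).card ≤ (G.neighborFinset v0).card := by
      rw [Finset.card_erase_of_mem (Finset.mem_univ _), Finset.card_univ, hn]
      show n - 1 ≤ G.degree v0
      rw [show G.degree v0 = ndeg G v0 from rfl, hv0]
    have heq := Finset.eq_of_subset_of_card_le hsub hcards
    intro w
    rw [← G.mem_neighborFinset, heq, Finset.mem_erase]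
    simp
  -- leaves have degree one
  have hleaf : ∀ w : V, w ≠ v0 → ndeg G w = 1 := by
    intro w hw
    have hadj' := (hadj w).mpr hw
    rcases hP v0 w hadj' with ⟨h1, h2⟩ | ⟨h2, h1⟩
    · -- deg v0 = 1, so n = 2 and deg w = n - 1 = 1
      have hv0' : deg G v0 = (n : ℝ) - 1 := (hdeg_iff v0).mpr hv0
      have hn2' : (n : ℝ) = 2 := by rw [hv0'] at h1; linarith
      have : (n : ℝ) - 1 = 1 := by rw [hn2']; norm_num
      rw [this] at h2
      exact (hdeg1_iff w).mp h2
    · exact (hdeg1_iff w).mp h2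
  refine ⟨v0, fun u w => ?_⟩
  constructor
  · intro h
    by_cases hu : u = v0
    · exact Or.inl ⟨hu, fun hwv => G.ne_of_adj h (hu.trans hwv.symm)⟩
    · by_cases hw : w = v0
      · exact Or.inr ⟨hw, hu⟩
      · -- impossible: u has two neighbors w and v0 but degree 1
        exfalso
        have h1 : G.Adj u v0 := ((hadj u).mpr hu).symm
        have hsub : ({w, v0} : Finset V) ⊆ G.neighborFinset u := by
          intro x hx
          rcases Finset.mem_insert.mp hx with rfl | hx
          · exact (G.mem_neighborFinset _ _).mpr h
          · rw [Finset.mem_singleton] at hx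
            subst hx
            exact (G.mem_neighborFinset _ _).mpr h1
        have hc : ({w, v0} : Finset V).card = 2 := Finset.card_pair hw
        have := Finset.card_le_card hsub
        rw [hc] at this
        have hdu : (G.neighborFinset u).card = 1 := hleaf u hu
        omega
  · rintro (⟨rfl, hw⟩ | ⟨rfl, hu⟩)
    · exact (hadj w).mpr hw
    · exact ((hadj u).mpr hu).symm

end P

lemma sum_main {V : Type*} [Fintype V] (G : SimpleGraph V) (n : ℕ)
    (hn : Fintype.card V = n) (hn2 : 2 ≤ n) :
    AG G ≤ ((n : ℝ) ^ 2 / (4 * ((n : ℝ) - 1))) * GA G ∧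
    (AG G = ((n : ℝ) ^ 2 / (4 * ((n : ℝ) - 1))) * GA G ↔
      ∀ u w, G.Adj u w →
        (deg G u = 1 ∧ deg G w = (n : ℝ) - 1) ∨ (deg G w = 1 ∧ deg G u = (n : ℝ) - 1)) := by
  letI := Classical.decRel G.Adj
  have hN : (2 : ℝ) ≤ (n : ℝ) := by exact_mod_cast hn2
  set C : ℝ := (n : ℝ) ^ 2 / (4 * ((n : ℝ) - 1)) with hC
  have hb : ∀ v : V, deg G v ≤ (n : ℝ) - 1 := by
    intro v
    have := deg_le_card (G := G) (u := v)
    rwa [hn] at this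
  set F1 : V → V → ℝ := fun u w =>
    if G.Adj u w then (Real.sqrt (deg G u / deg G w) + Real.sqrt (deg G w / deg G u)) / 2 else 0
    with hF1
  set F2 : V → V → ℝ := fun u w =>
    if G.Adj u w then 2 * Real.sqrt (deg G u * deg G w) / (deg G u + deg G w) else 0 with hF2
  have hAG : AG G = (1 / 2) * ∑ u : V, ∑ w : V, F1 u w := rfl
  have hGA : GA G = (1 / 2) * ∑ u : V, ∑ w : V, F2 u w := rfl
  have hterm : ∀ u w : V, F1 u w ≤ C * F2 u w := by
    intro u w
    by_cases h : G.Adj u w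
    · rw [hF1, hF2]
      simp only [if_pos h]
      exact (key_ineq hN (deg_one_le h) (hb u) (deg_one_le h.symm) (hb w)).1
    · rw [hF1, hF2]
      simp [if_neg h]
  have hsum : ∑ u : V, ∑ w : V, F1 u w ≤ ∑ u : V, ∑ w : V, C * F2 u w :=
    Finset.sum_le_sum fun u _ => Finset.sum_le_sum fun w _ => hterm u w
  have hmul : ∑ u : V, ∑ w : V, C * F2 u w = C * ∑ u : V, ∑ w : V, F2 u w := by
    simp_rw [← Finset.mul_sum]
  constructor
  · rw [hAG, hGA]
    rw [hmul] at hsum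
    linarith
  · have flat : (∑ u : V, ∑ w : V, F1 u w = ∑ u : V, ∑ w : V, C * F2 u w) ↔
        ∀ u w : V, F1 u w = C * F2 u w := by
      rw [← Finset.sum_product' (f := fun u w => F1 u w),
        ← Finset.sum_product' (f := fun u w => C * F2 u w)]
      rw [Finset.sum_eq_sum_iff_of_le (fun p _ => hterm p.1 p.2)]
      constructor
      · intro h u w
        exact h (u, w) (Finset.mem_product.mpr ⟨Finset.mem_univ _, Finset.mem_univ _⟩)
      · intro h p _
        exact h p.1 p.2
    have step1 : (AG G = C * GA G) ↔
        (∑ u : V, ∑ w : V, F1 u w = ∑ u : V, ∑ w : V, C * F2 u w) := by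
      rw [hAG, hGA, hmul]
      constructor <;> intro h <;> linarith
    rw [step1, flat]
    constructor
    · intro h u w hadj
      have := h u w
      rw [hF1, hF2] at this
      simp only [if_pos hadj] at this
      exact (key_ineq hN (deg_one_le hadj) (hb u) (deg_one_le hadj.symm) (hb w)).2.mp this
    · intro h u w
      by_cases hadj : G.Adj u w
      · rw [hF1, hF2]
        simp only [if_pos hadj]
        exact (key_ineq hN (deg_one_le hadj) (hb u) (deg_one_le hadj.symm) (hb w)).2.mpr
          (h u w hadj)
      · rw [hF1, hF2]
        simp [if_neg hadj]


/-- Corollary 5 of the paper. -/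
theorem stmt11 {V : Type*} [Fintype V] (G : SimpleGraph V) (hG : G.Connected)
    (n : ℕ) (hn : Fintype.card V = n) (hn2 : 2 ≤ n) :
    AG G ≤ ((n : ℝ) ^ 2 / (4 * ((n : ℝ) - 1))) * GA G ∧
    (AG G = ((n : ℝ) ^ 2 / (4 * ((n : ℝ) - 1))) * GA G ↔
      Nonempty (G ≃g completeBipartiteGraph (Fin 1) (Fin (n - 1)))) := by
  obtain ⟨hle, hiff⟩ := sum_main G n hn hn2
  refine ⟨hle, hiff.trans ?_⟩
  constructor
  · intro hP
    obtain ⟨v0, hstar⟩ := P_star hG n hn hn2 hP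
    exact star_iso n hn hstar
  · rintro ⟨φ⟩
    obtain ⟨v0, hstar⟩ := iso_star φ
    intro u w hadj
    have hcast : ((n - 1 : ℕ) : ℝ) = (n : ℝ) - 1 := by
      have h1 : 1 ≤ n := by omega
      push_cast [h1]
      ring
    have hhub : deg G v0 = (n : ℝ) - 1 := by
      rw [deg, star_ndeg_hub hstar, hn, hcast]
    have hlf : ∀ x, x ≠ v0 → deg G x = 1 := fun x hx => by
      rw [deg, star_ndeg_leaf hstar hx]; norm_num
    rcases (hstar u w).mp hadj with ⟨hu, hw⟩ | ⟨hw, hu⟩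
    · exact Or.inr ⟨hlf w hw, hu ▸ hhub⟩
    · exact Or.inl ⟨hlf u hu, hw ▸ hhub⟩
end

section
/- Let G be a finite simple connected graph of order n ≥ 2 with m edges, average degree d̄ = 2m/n, and chromatic number χ(G). Then χ(G) ≤ 2·AG(G)/d̄, with equality if and only if G is isomorphic to the complete graph K_n. -/
open SimpleGraph Finset

/-!
Every edge contributes at least `1` to `AG(G)` (AM-GM for `√(d_u/d_v)` and its inverse), so
`AG(G) ≥ m` and `2 AG(G)/d̄ = n AG(G)/m ≥ n ≥ χ(G)`. Equality forces `χ(G) = n`, which happens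
only for the complete graph; conversely `K_n` is regular, so every edge contributes exactly `1`.
-/

lemma one_le_add_sqrt_div_div_two {a b : ℝ} (ha : 0 < a) (hb : 0 < b) :
    1 ≤ (Real.sqrt (a / b) + Real.sqrt (b / a)) / 2 := by
  have hs : 0 ≤ Real.sqrt (a / b) := Real.sqrt_nonneg _
  have ht : 0 ≤ Real.sqrt (b / a) := Real.sqrt_nonneg _
  have hst : Real.sqrt (a / b) * Real.sqrt (b / a) = 1 := by
    rw [← Real.sqrt_mul (by positivity), div_mul_div_comm, mul_comm b a,
      div_self (by positivity), Real.sqrt_one]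
  nlinarith [sq_nonneg (Real.sqrt (a / b) - 1)]

section edgeSum

variable {V : Type*} [Fintype V] (G : SimpleGraph V)

lemma one_le_deg_of_adj {u w : V} (h : G.Adj u w) : 1 ≤ deg G u := by
  classical
  have : 0 < G.degree u := G.degree_pos_iff_exists_adj u |>.mpr ⟨w, h⟩
  simp only [deg, ndeg]
  exact_mod_cast this

lemma edgeSum_const (c : ℝ) : edgeSum G (fun _ _ => c) = c * G.edgeSet.ncard := by
  classical
  have hrow : ∀ u : V, ∑ w : V, (if G.Adj u w then c else 0) = c * G.degree u := by
    intro u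
    rw [Finset.sum_ite, Finset.sum_const_zero, add_zero, Finset.sum_const, nsmul_eq_mul,
      mul_comm, ← card_neighborFinset_eq_degree, neighborFinset_eq_filter]
  have hcard : G.edgeSet.ncard = #G.edgeFinset := by
    rw [← coe_edgeFinset, Set.ncard_coe_finset]
  rw [edgeSum, Finset.sum_congr rfl fun u _ => hrow u, ← Finset.mul_sum, ← Nat.cast_sum,
    sum_degrees_eq_twice_card_edges, hcard]
  push_cast
  ring

variable {G}

lemma edgeSum_le_edgeSum_of_adj {f g : ℝ → ℝ → ℝ}
    (h : ∀ u w, G.Adj u w → f (deg G u) (deg G w) ≤ g (deg G u) (deg G w)) :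
    edgeSum G f ≤ edgeSum G g := by
  unfold edgeSum
  gcongr with u _ w _
  split_ifs with hadj
  exacts [h u w hadj, le_rfl]

lemma edgeSum_congr_of_adj {f g : ℝ → ℝ → ℝ}
    (h : ∀ u w, G.Adj u w → f (deg G u) (deg G w) = g (deg G u) (deg G w)) :
    edgeSum G f = edgeSum G g :=
  le_antisymm (edgeSum_le_edgeSum_of_adj fun u w hadj => (h u w hadj).le)
    (edgeSum_le_edgeSum_of_adj fun u w hadj => (h u w hadj).ge)

end edgeSum

section AG

variable {V : Type*} [Fintype V] (G : SimpleGraph V)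

lemma card_edgeSet_le_AG : (G.edgeSet.ncard : ℝ) ≤ AG G := by
  rw [← one_mul (G.edgeSet.ncard : ℝ), ← edgeSum_const]
  refine edgeSum_le_edgeSum_of_adj fun u w hadj => ?_
  exact one_le_add_sqrt_div_div_two (by linarith [one_le_deg_of_adj G hadj])
    (by linarith [one_le_deg_of_adj G hadj.symm])

lemma AG_eq_card_edgeSet_of_regular (hreg : ∀ u w, deg G u = deg G w) :
    AG G = G.edgeSet.ncard := by
  rw [← one_mul (G.edgeSet.ncard : ℝ), ← edgeSum_const, AG]
  refine edgeSum_congr_of_adj fun u w hadj => ?_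
  have hu : deg G u ≠ 0 := by linarith [one_le_deg_of_adj G hadj]
  rw [hreg w u, div_self hu, Real.sqrt_one]
  norm_num

lemma AG_top : AG (⊤ : SimpleGraph V) = (⊤ : SimpleGraph V).edgeSet.ncard := by
  classical
  refine AG_eq_card_edgeSet_of_regular _ fun u w => ?_
  simp only [deg, ndeg]
  congr 1
  convert (complete_graph_degree u).trans (complete_graph_degree w).symm

end AG

lemma nonempty_iso_top_iff {V W : Type*} [Fintype V] [Fintype W] (G : SimpleGraph V)
    (hcard : Fintype.card V = Fintype.card W) :
    Nonempty (G ≃g (⊤ : SimpleGraph W)) ↔ G = ⊤ := by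
  constructor
  · rintro ⟨f⟩
    rw [← chromaticNumber_eq_card_iff, chromaticNumber_congr f, chromaticNumber_top, hcard]
  · rintro rfl
    rw [← completeGraph_eq_top, ← completeGraph_eq_top]
    exact ⟨Iso.completeGraph (Fintype.equivOfCardEq hcard)⟩

/-- The `AG`-analogue of Conjecture 1 (Aouchiche–Hansen), which the paper proves:
`χ(G) ≤ 2 AG(G)/d̄` with equality iff `G ≅ Kₙ`. -/
theorem stmt12 {V : Type*} [Fintype V] (G : SimpleGraph V) (hG : G.Connected)
    (n m χ : ℕ) (hn : Fintype.card V = n) (hn2 : 2 ≤ n)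
    (hm : G.edgeSet.ncard = m)
    (hχ : G.chromaticNumber = (χ : ℕ∞)) :
    (χ : ℝ) ≤ 2 * AG G / (2 * (m : ℝ) / (n : ℝ)) ∧
    ((χ : ℝ) = 2 * AG G / (2 * (m : ℝ) / (n : ℝ)) ↔
      Nonempty (G ≃g (⊤ : SimpleGraph (Fin n)))) := by
  have hm_pos : (0 : ℝ) < m := by
    have := hG.card_vert_le_card_edgeSet_add_one
    rw [Nat.card_eq_fintype_card, Nat.card_coe_set_eq] at this
    exact_mod_cast (by omega : 0 < m)
  have hratio : 2 * AG G / (2 * (m : ℝ) / n) = AG G * n / m := by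
    field_simp
  have hn_le : (n : ℝ) ≤ AG G * n / m := by
    rw [le_div_iff₀ hm_pos]
    nlinarith [hm ▸ card_edgeSet_le_AG G]
  have hχ_le : χ ≤ n := by
    have := G.chromaticNumber_le_card
    rwa [hχ, hn, Nat.cast_le] at this
  have hχ_iff : χ = n ↔ G = ⊤ := by
    rw [← chromaticNumber_eq_card_iff, hχ, hn, Nat.cast_inj]
  rw [hratio, nonempty_iso_top_iff G (hn.trans (Fintype.card_fin n).symm), ← hχ_iff]
  refine ⟨le_trans (by exact_mod_cast hχ_le) hn_le, fun heq => ?_, fun hχn => ?_⟩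
  · have : (n : ℝ) ≤ χ := heq ▸ hn_le
    exact le_antisymm hχ_le (by exact_mod_cast this)
  · obtain rfl := hχ_iff.mp hχn
    rw [AG_top, hm, hχn]
    field_simp
end

section
/- Let G be a finite simple connected graph of order n with minimum degree δ ≥ 2. Then (δ/√(2δ−2))·ABC(G) ≤ AG(G) ≤ ((n−1)/√(2n−4))·ABC(G); the left equality holds if and only if G is δ-regular, and the right equality holds if and only if G is isomorphic to the complete graph K_n. -/
open SimpleGraph

section AuxAGABC

open Real

private lemma agabc_poly_left (d t : ℝ) (hd : 2 ≤ d) (ht : 2*d ≤ t) :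
    d / Real.sqrt (2*d-2) * Real.sqrt (t-2) ≤ t/2 ∧
    (d / Real.sqrt (2*d-2) * Real.sqrt (t-2) = t/2 ↔ t = 2*d) := by
  have hs2 : (0:ℝ) < 2*d-2 := by linarith
  have hs : 0 < Real.sqrt (2*d-2) := Real.sqrt_pos.2 hs2
  have ht2 : (0:ℝ) ≤ t - 2 := by linarith
  set a := d / Real.sqrt (2*d-2) * Real.sqrt (t-2) with ha
  have ha0 : 0 ≤ a := by positivity
  have hasq : a^2 = d^2 * (t-2) / (2*d-2) := by
    rw [ha, mul_pow, div_pow, Real.sq_sqrt ht2, Real.sq_sqrt hs2.le]; ring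
  have key : a^2 ≤ (t/2)^2 := by
    rw [hasq, div_le_iff₀ hs2]
    nlinarith [mul_nonneg (by linarith : (0:ℝ) ≤ t - 2*d) (by nlinarith : (0:ℝ) ≤ (2*d-2)*t - 4*d)]
  have hineq : a ≤ t/2 := (pow_le_pow_iff_left₀ ha0 (by linarith) two_ne_zero).mp key
  refine ⟨hineq, ⟨fun heq => ?_, fun heq => ?_⟩⟩
  · by_contra hne
    have htgt : 2*d < t := lt_of_le_of_ne ht (Ne.symm hne)
    have hf2 : (0:ℝ) < (2*d-2)*t - 4*d := by
      nlinarith [mul_pos hs2 (show (0:ℝ) < t - 2*d by linarith)]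
    have h1 : a^2 = (t/2)^2 := by rw [heq]
    rw [hasq] at h1
    have h2 := (div_eq_iff (ne_of_gt hs2)).mp h1
    nlinarith [mul_pos (show (0:ℝ) < t - 2*d by linarith) hf2]
  · rw [ha, heq]
    show d / Real.sqrt (2*d-2) * Real.sqrt (2*d-2) = 2*d/2
    rw [div_mul_cancel₀ d hs.ne']
    ring

private lemma agabc_poly_right (m t : ℝ) (hm : 2 ≤ m) (ht4 : 4 ≤ t) (ht : t ≤ 2*m) :
    t/2 ≤ m / Real.sqrt (2*m-2) * Real.sqrt (t-2) ∧
    (m / Real.sqrt (2*m-2) * Real.sqrt (t-2) = t/2 ↔ t = 2*m) := by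
  have hs2 : (0:ℝ) < 2*m-2 := by linarith
  have hs : 0 < Real.sqrt (2*m-2) := Real.sqrt_pos.2 hs2
  have ht2 : (0:ℝ) ≤ t - 2 := by linarith
  set a := m / Real.sqrt (2*m-2) * Real.sqrt (t-2) with ha
  have ha0 : 0 ≤ a := by positivity
  have hasq : a^2 = m^2 * (t-2) / (2*m-2) := by
    rw [ha, mul_pow, div_pow, Real.sq_sqrt ht2, Real.sq_sqrt hs2.le]; ring
  have key : (t/2)^2 ≤ a^2 := by
    rw [hasq, le_div_iff₀ hs2]
    nlinarith [mul_nonneg (by linarith : (0:ℝ) ≤ 2*m - t) (by nlinarith : (0:ℝ) ≤ (2*m-2)*t - 4*m)]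
  have hineq : t/2 ≤ a := (pow_le_pow_iff_left₀ (by linarith) ha0 two_ne_zero).mp key
  refine ⟨hineq, ⟨fun heq => ?_, fun heq => ?_⟩⟩
  · by_contra hne
    have htlt : t < 2*m := lt_of_le_of_ne ht hne
    have hm2 : 2 < m := by linarith
    have hf2 : (0:ℝ) < (2*m-2)*t - 4*m := by nlinarith
    have h1 : a^2 = (t/2)^2 := by rw [heq]
    rw [hasq] at h1
    have h2 := (div_eq_iff (ne_of_gt hs2)).mp h1
    nlinarith [mul_pos (show (0:ℝ) < 2*m - t by linarith) hf2]
  · rw [ha, heq]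
    show m / Real.sqrt (2*m-2) * Real.sqrt (2*m-2) = 2*m/2
    rw [div_mul_cancel₀ m hs.ne']
    ring

private lemma agabc_AG_repr (x y : ℝ) (hx : 0 < x) (hy : 0 < y) :
    (Real.sqrt (x/y) + Real.sqrt (y/x))/2 = (x+y)/2 / Real.sqrt (x*y) := by
  have hsx : 0 < Real.sqrt x := Real.sqrt_pos.2 hx
  have hsy : 0 < Real.sqrt y := Real.sqrt_pos.2 hy
  have hxx := Real.mul_self_sqrt hx.le
  have hyy := Real.mul_self_sqrt hy.le
  rw [Real.sqrt_div hx.le, Real.sqrt_div hy.le, Real.sqrt_mul hx.le]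
  rw [div_add_div _ _ hsy.ne' hsx.ne', div_div]
  rw [div_eq_div_iff (by positivity) (by positivity)]
  linear_combination (Real.sqrt x * Real.sqrt y) * hxx + (Real.sqrt x * Real.sqrt y) * hyy

private lemma agabc_edge_left (d x y : ℝ) (hd : 2 ≤ d) (hx : d ≤ x) (hy : d ≤ y) :
    0 ≤ (Real.sqrt (x/y) + Real.sqrt (y/x))/2
        - d / Real.sqrt (2*d-2) * Real.sqrt ((x+y-2)/(x*y)) ∧
    ((Real.sqrt (x/y) + Real.sqrt (y/x))/2
        - d / Real.sqrt (2*d-2) * Real.sqrt ((x+y-2)/(x*y)) = 0 ↔ x = d ∧ y = d) := by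
  have hx0 : (0:ℝ) < x := by linarith
  have hy0 : (0:ℝ) < y := by linarith
  have h2 : (0:ℝ) ≤ x + y - 2 := by linarith
  have hxy : 0 < Real.sqrt (x*y) := Real.sqrt_pos.2 (mul_pos hx0 hy0)
  have hp := agabc_poly_left d (x+y) hd (by linarith)
  rw [agabc_AG_repr x y hx0 hy0, Real.sqrt_div h2]
  have hrepr : (x+y)/2/Real.sqrt (x*y)
      - d/Real.sqrt (2*d-2) * (Real.sqrt (x+y-2)/Real.sqrt (x*y))
      = ((x+y)/2 - d/Real.sqrt (2*d-2)*Real.sqrt (x+y-2))/Real.sqrt (x*y) := by ring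
  rw [hrepr]
  constructor
  · exact div_nonneg (by linarith [hp.1]) hxy.le
  · rw [div_eq_zero_iff]
    constructor
    · rintro (hnum | habs)
      · have he : d/Real.sqrt (2*d-2)*Real.sqrt (x+y-2) = (x+y)/2 := by linarith
        have ht := hp.2.mp he
        constructor <;> linarith
      · exact absurd habs hxy.ne'
    · rintro ⟨h1, h2'⟩
      left
      have he : x + y = 2*d := by rw [h1, h2']; ring
      have := hp.2.mpr he
      linarith

private lemma agabc_edge_right (m x y : ℝ) (hm : 2 ≤ m) (hx2 : 2 ≤ x) (hy2 : 2 ≤ y)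
    (hx : x ≤ m) (hy : y ≤ m) :
    0 ≤ m / Real.sqrt (2*m-2) * Real.sqrt ((x+y-2)/(x*y))
        - (Real.sqrt (x/y) + Real.sqrt (y/x))/2 ∧
    (m / Real.sqrt (2*m-2) * Real.sqrt ((x+y-2)/(x*y))
        - (Real.sqrt (x/y) + Real.sqrt (y/x))/2 = 0 ↔ x = m ∧ y = m) := by
  have hx0 : (0:ℝ) < x := by linarith
  have hy0 : (0:ℝ) < y := by linarith
  have h2 : (0:ℝ) ≤ x + y - 2 := by linarith
  have hxy : 0 < Real.sqrt (x*y) := Real.sqrt_pos.2 (mul_pos hx0 hy0)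
  have hp := agabc_poly_right m (x+y) hm (by linarith) (by linarith)
  rw [agabc_AG_repr x y hx0 hy0, Real.sqrt_div h2]
  have hrepr : m/Real.sqrt (2*m-2) * (Real.sqrt (x+y-2)/Real.sqrt (x*y))
      - (x+y)/2/Real.sqrt (x*y)
      = (m/Real.sqrt (2*m-2)*Real.sqrt (x+y-2) - (x+y)/2)/Real.sqrt (x*y) := by ring
  rw [hrepr]
  constructor
  · exact div_nonneg (by linarith [hp.1]) hxy.le
  · rw [div_eq_zero_iff]
    constructor
    · rintro (hnum | habs)
      · have he : m/Real.sqrt (2*m-2)*Real.sqrt (x+y-2) = (x+y)/2 := by linarith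
        have ht := hp.2.mp he
        constructor <;> linarith
      · exact absurd habs hxy.ne'
    · rintro ⟨h1, h2'⟩
      left
      have he : x + y = 2*m := by rw [h1, h2']; ring
      have := hp.2.mpr he
      linarith

variable {V : Type*} [Fintype V] (G : SimpleGraph V)

private lemma agabc_edgeSum_nonneg_and (f : ℝ → ℝ → ℝ)
    (h : ∀ u w, G.Adj u w → 0 ≤ f (deg G u) (deg G w)) :
    0 ≤ edgeSum G f ∧
      (edgeSum G f = 0 ↔ ∀ u w, G.Adj u w → f (deg G u) (deg G w) = 0) := by
  letI := Classical.decRel G.Adj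
  have hterm : ∀ u w, 0 ≤ (if G.Adj u w then f (deg G u) (deg G w) else 0) := by
    intro u w; split_ifs with h'
    · exact h u w h'
    · exact le_refl 0
  have hS : 0 ≤ ∑ u : V, ∑ w : V, if G.Adj u w then f (deg G u) (deg G w) else 0 :=
    Finset.sum_nonneg fun u _ => Finset.sum_nonneg fun w _ => hterm u w
  constructor
  · unfold edgeSum; positivity
  · unfold edgeSum
    rw [mul_eq_zero]
    simp only [one_div, inv_eq_zero, OfNat.ofNat_ne_zero, false_or]
    rw [Finset.sum_eq_zero_iff_of_nonneg
      (fun u _ => Finset.sum_nonneg fun w _ => hterm u w)]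
    constructor
    · intro hz u w hadj
      have := (Finset.sum_eq_zero_iff_of_nonneg (fun w _ => hterm u w)).mp
        (hz u (Finset.mem_univ u)) w (Finset.mem_univ w)
      rwa [if_pos hadj] at this
    · intro hz u _
      refine Finset.sum_eq_zero fun w _ => ?_
      split_ifs with h'
      · exact hz u w h'
      · rfl

private lemma agabc_edgeSum_sub_smul (c : ℝ) (f g : ℝ → ℝ → ℝ) :
    edgeSum G (fun x y => f x y - c * g x y) = edgeSum G f - c * edgeSum G g := by
  letI := Classical.decRel G.Adj
  unfold edgeSum
  have h : ∀ u w : V, (if G.Adj u w then f (deg G u) (deg G w) - c * g (deg G u) (deg G w) else 0)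
      = (if G.Adj u w then f (deg G u) (deg G w) else 0)
        - c * (if G.Adj u w then g (deg G u) (deg G w) else 0) := by
    intro u w; split_ifs <;> simp
  simp only [h, Finset.sum_sub_distrib, ← Finset.mul_sum]
  ring

private lemma agabc_edgeSum_smul_sub (c : ℝ) (f g : ℝ → ℝ → ℝ) :
    edgeSum G (fun x y => c * g x y - f x y) = c * edgeSum G g - edgeSum G f := by
  letI := Classical.decRel G.Adj
  unfold edgeSum
  have h : ∀ u w : V, (if G.Adj u w then c * g (deg G u) (deg G w) - f (deg G u) (deg G w) else 0)
      = c * (if G.Adj u w then g (deg G u) (deg G w) else 0)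
        - (if G.Adj u w then f (deg G u) (deg G w) else 0) := by
    intro u w; split_ifs <;> simp
  simp only [h, Finset.sum_sub_distrib, ← Finset.mul_sum]
  ring

private lemma agabc_adj_of_ndeg (h : ∀ v, ndeg G v = Fintype.card V - 1) :
    ∀ u w, G.Adj u w ↔ u ≠ w := by
  letI := Classical.decRel G.Adj
  letI : DecidableEq V := Classical.decEq V
  intro u w
  constructor
  · exact fun h' => h'.ne
  · intro hne
    have hsub : G.neighborFinset u ⊆ Finset.univ.erase u := fun w' hw' =>
      Finset.mem_erase.2 ⟨((G.mem_neighborFinset u w').mp hw').ne', Finset.mem_univ _⟩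
    have hcard : (Finset.univ.erase u).card ≤ (G.neighborFinset u).card := by
      rw [Finset.card_erase_of_mem (Finset.mem_univ u), Finset.card_univ]
      have h2 : (G.neighborFinset u).card = Fintype.card V - 1 := h u
      omega
    have := Finset.eq_of_subset_of_card_le hsub hcard
    have hw : w ∈ G.neighborFinset u := by
      rw [this]; exact Finset.mem_erase.2 ⟨hne.symm, Finset.mem_univ _⟩
    exact (G.mem_neighborFinset u w).mp hw

private lemma agabc_ndeg_of_adj (h : ∀ u w, G.Adj u w ↔ u ≠ w) :
    ∀ v, ndeg G v = Fintype.card V - 1 := by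
  letI := Classical.decRel G.Adj
  letI : DecidableEq V := Classical.decEq V
  intro v
  have heq : G.neighborFinset v = Finset.univ.erase v := by
    ext w
    rw [G.mem_neighborFinset, Finset.mem_erase, h v w]
    constructor
    · exact fun h' => ⟨h'.symm, Finset.mem_univ _⟩
    · exact fun h' => h'.1.symm
  show (G.neighborFinset v).card = _
  rw [heq, Finset.card_erase_of_mem (Finset.mem_univ v), Finset.card_univ]

private lemma agabc_iso_top_iff (n : ℕ) (hn : Fintype.card V = n) :
    (∀ u w, G.Adj u w ↔ u ≠ w) ↔ Nonempty (G ≃g (⊤ : SimpleGraph (Fin n))) := by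
  constructor
  · intro h
    exact ⟨⟨Fintype.equivFinOfCardEq hn, by
      intro a b
      simp only [top_adj, ne_eq, Equiv.coe_fn_mk, EmbeddingLike.apply_eq_iff_eq]
      rw [h a b]⟩⟩
  · rintro ⟨f⟩ u w
    rw [← f.map_rel_iff]
    simp only [top_adj, ne_eq]
    rw [not_iff_not]
    exact ⟨fun h' => f.toEquiv.injective h', fun h' => by rw [h']⟩

private lemma agabc_exists_adj (v : V) (hv : 0 < ndeg G v) : ∃ w, G.Adj v w := by
  letI := Classical.decRel G.Adj
  exact (G.degree_pos_iff_exists_adj v).mp hv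

end AuxAGABC

/-- Theorem 9 of the paper: comparison of `AG` and `ABC`. -/
theorem stmt14 {V : Type*} [Fintype V] (G : SimpleGraph V) (hG : G.Connected)
    (n δ : ℕ) (hn : Fintype.card V = n)
    (hδ : IsLeast (Set.range (ndeg G)) δ) (hδ2 : 2 ≤ δ) :
    (((δ : ℝ) / Real.sqrt (2 * (δ : ℝ) - 2)) * ABC G ≤ AG G ∧
      AG G ≤ (((n : ℝ) - 1) / Real.sqrt (2 * (n : ℝ) - 4)) * ABC G) ∧
    (((δ : ℝ) / Real.sqrt (2 * (δ : ℝ) - 2)) * ABC G = AG G ↔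
      ∀ v : V, ndeg G v = δ) ∧
    (AG G = (((n : ℝ) - 1) / Real.sqrt (2 * (n : ℝ) - 4)) * ABC G ↔
      Nonempty (G ≃g (⊤ : SimpleGraph (Fin n)))) := by
  letI := Classical.decRel G.Adj
  obtain ⟨v₀, hv₀⟩ := hδ.1
  have hdegδ : ∀ v, δ ≤ ndeg G v := fun v => hδ.2 ⟨v, rfl⟩
  have hdegn : ∀ v, ndeg G v + 1 ≤ n := by
    intro v
    have : ndeg G v < Fintype.card V := G.degree_lt_card_verts v
    omega
  have hn3 : 3 ≤ n := by
    have h1 := hdegδ v₀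
    have h2 := hdegn v₀
    omega
  have hrδ : (2:ℝ) ≤ (δ:ℝ) := by exact_mod_cast hδ2
  have hdlo : ∀ v, (δ:ℝ) ≤ deg G v := fun v => by
    have := hdegδ v; unfold deg; exact_mod_cast this
  have hdhi : ∀ v, deg G v ≤ (n:ℝ) - 1 := fun v => by
    have := hdegn v
    have : (ndeg G v : ℝ) + 1 ≤ (n:ℝ) := by exact_mod_cast this
    unfold deg; linarith
  have hd2 : ∀ v, (2:ℝ) ≤ deg G v := fun v => le_trans hrδ (hdlo v)
  have hm2 : (2:ℝ) ≤ (n:ℝ) - 1 := by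
    have : (3:ℝ) ≤ (n:ℝ) := by exact_mod_cast hn3
    linarith
  have hcoef : 2*(n:ℝ) - 4 = 2*((n:ℝ)-1) - 2 := by ring
  -- Left side
  set cL : ℝ := (δ:ℝ) / Real.sqrt (2*(δ:ℝ)-2) with hcL
  have hLkey := agabc_edgeSum_nonneg_and G
    (fun x y => (Real.sqrt (x/y) + Real.sqrt (y/x))/2
      - cL * Real.sqrt ((x+y-2)/(x*y)))
    (fun u w hadj => (agabc_edge_left (δ:ℝ) (deg G u) (deg G w) hrδ (hdlo u) (hdlo w)).1)
  have hLlin : edgeSum G (fun x y => (Real.sqrt (x/y) + Real.sqrt (y/x))/2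
      - cL * Real.sqrt ((x+y-2)/(x*y))) = AG G - cL * ABC G :=
    agabc_edgeSum_sub_smul G cL _ _
  rw [hLlin] at hLkey
  -- Right side
  set m : ℝ := (n:ℝ) - 1 with hm
  have hcR : ((n:ℝ)-1) / Real.sqrt (2*(n:ℝ)-4) = m / Real.sqrt (2*m-2) := by
    rw [hcoef]
  have hRkey := agabc_edgeSum_nonneg_and G
    (fun x y => (m / Real.sqrt (2*m-2)) * Real.sqrt ((x+y-2)/(x*y))
      - (Real.sqrt (x/y) + Real.sqrt (y/x))/2)
    (fun u w hadj => (agabc_edge_right m (deg G u) (deg G w) hm2 (hd2 u) (hd2 w)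
      (hdhi u) (hdhi w)).1)
  have hRlin : edgeSum G (fun x y => (m / Real.sqrt (2*m-2)) * Real.sqrt ((x+y-2)/(x*y))
      - (Real.sqrt (x/y) + Real.sqrt (y/x))/2)
      = (m / Real.sqrt (2*m-2)) * ABC G - AG G :=
    agabc_edgeSum_smul_sub G (m / Real.sqrt (2*m-2)) _ _
  rw [hRlin] at hRkey
  have hvpos : ∀ v, 0 < ndeg G v := fun v => by have := hdegδ v; omega
  refine ⟨⟨by linarith [hLkey.1], by rw [hcR]; linarith [hRkey.1]⟩, ?_, ?_⟩
  · -- left equality iff δ-regular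
    rw [show (cL * ABC G = AG G) ↔ (AG G - cL * ABC G = 0) by constructor <;> intro h <;> linarith]
    rw [hLkey.2]
    constructor
    · intro h v
      obtain ⟨w, hw⟩ := agabc_exists_adj G v (hvpos v)
      have h1 := ((agabc_edge_left (δ:ℝ) (deg G v) (deg G w) hrδ (hdlo v) (hdlo w)).2.mp
        (h v w hw)).1
      unfold deg at h1
      exact_mod_cast h1
    · intro h u w hadj
      refine (agabc_edge_left (δ:ℝ) (deg G u) (deg G w) hrδ (hdlo u) (hdlo w)).2.mpr ⟨?_, ?_⟩
      · unfold deg; rw [h u]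
      · unfold deg; rw [h w]
  · -- right equality iff complete
    rw [hcR]
    rw [show (AG G = m / Real.sqrt (2*m-2) * ABC G) ↔
      (m / Real.sqrt (2*m-2) * ABC G - AG G = 0) by constructor <;> intro h <;> linarith]
    rw [hRkey.2]
    rw [← agabc_iso_top_iff G n hn]
    have hcast : ∀ v, ndeg G v = n - 1 ↔ deg G v = m := by
      intro v
      unfold deg
      rw [hm]
      constructor
      · intro h
        rw [h]
        have : (1:ℕ) ≤ n := by omega
        push_cast [Nat.cast_sub this]
        ring
      · intro h
        have : (ndeg G v : ℝ) = ((n - 1 : ℕ) : ℝ) := by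
          rw [h, Nat.cast_sub (by omega : (1:ℕ) ≤ n)]
          push_cast
          ring
        exact_mod_cast this
    constructor
    · intro h
      apply agabc_adj_of_ndeg
      intro v
      rw [hn]
      obtain ⟨w, hw⟩ := agabc_exists_adj G v (hvpos v)
      exact (hcast v).mpr
        (((agabc_edge_right m (deg G v) (deg G w) hm2 (hd2 v) (hd2 w)
          (hdhi v) (hdhi w)).2.mp (h v w hw)).1)
    · intro h u w hadj
      have hall := agabc_ndeg_of_adj G h
      refine (agabc_edge_right m (deg G u) (deg G w) hm2 (hd2 u) (hd2 w)
        (hdhi u) (hdhi w)).2.mpr ⟨?_, ?_⟩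
      · exact (hcast u).mp (by rw [hall u, hn])
      · exact (hcast w).mp (by rw [hall w, hn])
end

section
/- Let G be a finite simple connected graph with minimum degree δ ≥ 2 that is not isomorphic to a cycle C_n. Then AG(G) > √2·ABC(G). -/
/-!
Over the common denominator `√(d_u d_v)`, the AG weight of an edge is `s / 2` and its `√2`-scaled
ABC weight is `√(2 (s - 2))`, where `s = d_u + d_v`; since `s² / 4 - 2 (s - 2) = (s - 4)² / 4`,
the former dominates, strictly unless `s = 4`. When `δ ≥ 2`, `s = 4` forces `d_u = d_v = 2`, so
every edge at a vertex of degree at least `3` contributes strictly. Such a vertex exists because a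
connected `2`-regular graph is a cycle: it contains a cycle, and an injective degree-preserving
homomorphism into a connected graph is onto, hence an isomorphism.
-/

open SimpleGraph

namespace SimpleGraph

variable {V W : Type*} {G : SimpleGraph V} {H : SimpleGraph W}

lemma Hom.image_neighborFinset_eq_of_degree_eq [G.LocallyFinite] [H.LocallyFinite]
    [DecidableEq V] (f : H →g G) (hf : Function.Injective f)
    (hdeg : ∀ a, G.degree (f a) = H.degree a) (a : W) :
    (H.neighborFinset a).image f = G.neighborFinset (f a) := by
  refine Finset.eq_of_subset_of_card_le (fun v hv => ?_) ?_
  · obtain ⟨b, hb, rfl⟩ := Finset.mem_image.1 hv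
    simpa using f.map_adj ((mem_neighborFinset _ _ _).1 hb)
  · rw [Finset.card_image_of_injective _ hf, card_neighborFinset_eq_degree,
      card_neighborFinset_eq_degree, hdeg]

theorem Hom.nonempty_iso_of_injective_of_degree_eq [G.LocallyFinite] [H.LocallyFinite]
    [Nonempty W] (hG : G.Preconnected) (f : H →g G)
    (hf : Function.Injective f) (hdeg : ∀ a, G.degree (f a) = H.degree a) :
    Nonempty (H ≃g G) := by
  classical
  have hnbr : ∀ a v, G.Adj (f a) v → ∃ b, H.Adj a b ∧ f b = v := fun a v hav => by
    have hv : v ∈ (H.neighborFinset a).image f := by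
      rw [f.image_neighborFinset_eq_of_degree_eq hf hdeg]; simpa using hav
    simpa using hv
  have hsurj : Function.Surjective f := by
    obtain ⟨a₀⟩ := ‹Nonempty W›
    have hreach : ∀ u v (p : G.Walk u v), u ∈ Set.range f → v ∈ Set.range f := by
      intro u v p
      induction p with
      | nil => exact id
      | cons huw _ ih =>
        rintro ⟨a, rfl⟩
        obtain ⟨b, -, rfl⟩ := hnbr a _ huw
        exact ih ⟨b, rfl⟩
    exact fun v => hreach _ v (hG (f a₀) v).some ⟨a₀, rfl⟩
  refine ⟨⟨Equiv.ofBijective f ⟨hf, hsurj⟩, fun {a b} => ⟨fun hab => ?_, f.map_adj⟩⟩⟩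
  obtain ⟨b', hab', hb'⟩ := hnbr a (f b) hab
  exact hf hb' ▸ hab'

lemma isCycles_of_degree_eq_two [G.LocallyFinite] (h : ∀ v, G.degree v = 2) :
    G.IsCycles := fun v _ => by
  rw [Set.ncard_eq_toFinset_card', ← neighborFinset_def, card_neighborFinset_eq_degree, h v]

theorem exists_iso_cycleGraph_of_degree_eq_two [Fintype V] [DecidableRel G.Adj]
    (hG : G.Connected) (h : ∀ v, G.degree v = 2) : ∃ n, Nonempty (G ≃g cycleGraph n) := by
  obtain ⟨v⟩ := hG.nonempty
  have hv : (G.neighborSet v).Nonempty := by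
    rw [← Set.toFinset_nonempty, ← Finset.card_pos, ← neighborFinset_def]
    simp [h v]
  obtain ⟨p, hp, -⟩ :=
    (isCycles_of_degree_eq_two h).exists_cycle_toSubgraph_verts_eq_connectedComponentSupp
      (c := G.connectedComponentMk v) rfl hv
  obtain ⟨f⟩ := (cycleGraph_isContained_iff hp.three_le_length).2 ⟨v, p, hp, rfl⟩
  obtain ⟨n, hn⟩ : ∃ n, p.length = n + 3 := ⟨p.length - 3, by have := hp.three_le_length; omega⟩
  rw [hn] at f
  obtain ⟨e⟩ := f.toHom.nonempty_iso_of_injective_of_degree_eq hG.preconnected f.injective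
    (fun a => by rw [h, cycleGraph_degree_three_le])
  exact ⟨n + 3, ⟨e.symm⟩⟩

end SimpleGraph

section EdgeWeights

variable {x y : ℝ}

lemma sqrt_div_add_sqrt_div (hx : 0 < x) (hy : 0 < y) :
    √(x / y) + √(y / x) = (x + y) / √(x * y) := by
  have hsx : √x ≠ 0 := by positivity
  have hsy : √y ≠ 0 := by positivity
  rw [Real.sqrt_div hx.le, Real.sqrt_div hy.le, Real.sqrt_mul hx.le]
  field_simp
  rw [Real.sq_sqrt hx.le, Real.sq_sqrt hy.le]

lemma sqrt_two_mul_sqrt_div (hxy : 0 ≤ x * y) :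
    √2 * √((x + y - 2) / (x * y)) = √(2 * (x + y - 2)) / √(x * y) := by
  rw [← Real.sqrt_mul zero_le_two, ← mul_div_assoc, Real.sqrt_div' _ hxy]

lemma sqrt_two_mul_sub_two_le_half (s : ℝ) (hs : 0 ≤ s) : √(2 * (s - 2)) ≤ s / 2 :=
  Real.sqrt_le_iff.2 ⟨by positivity, by nlinarith [sq_nonneg (s - 4)]⟩

lemma sqrt_two_mul_sub_two_lt_half (s : ℝ) (hs : 0 < s) (h4 : s ≠ 4) : √(2 * (s - 2)) < s / 2 :=
  (Real.sqrt_lt' (by positivity)).2 (by nlinarith [sq_pos_of_ne_zero (sub_ne_zero.2 h4)])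

lemma sqrt_two_mul_abc_weight_le_ag_weight (hx : 0 < x) (hy : 0 < y) :
    √2 * √((x + y - 2) / (x * y)) ≤ (√(x / y) + √(y / x)) / 2 := by
  rw [sqrt_div_add_sqrt_div hx hy, sqrt_two_mul_sqrt_div (by positivity), div_right_comm]
  exact div_le_div_of_nonneg_right (sqrt_two_mul_sub_two_le_half _ (by positivity))
    (Real.sqrt_nonneg _)

lemma sqrt_two_mul_abc_weight_lt_ag_weight (hx : 0 < x) (hy : 0 < y) (h4 : x + y ≠ 4) :
    √2 * √((x + y - 2) / (x * y)) < (√(x / y) + √(y / x)) / 2 := by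
  rw [sqrt_div_add_sqrt_div hx hy, sqrt_two_mul_sqrt_div (by positivity), div_right_comm]
  exact div_lt_div_of_pos_right (sqrt_two_mul_sub_two_lt_half _ (by positivity) h4)
    (by positivity)

end EdgeWeights

section EdgeSum

variable {V : Type*} [Fintype V] {G : SimpleGraph V}

lemma mul_edgeSum (c : ℝ) (f : ℝ → ℝ → ℝ) :
    c * edgeSum G f = edgeSum G (fun x y => c * f x y) := by
  simp only [edgeSum, Finset.mul_sum, mul_ite, mul_zero]
  ring_nf

lemma edgeSum_lt_edgeSum {f g : ℝ → ℝ → ℝ}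
    (hle : ∀ u w, G.Adj u w → f (deg G u) (deg G w) ≤ g (deg G u) (deg G w))
    (hlt : ∃ u w, G.Adj u w ∧ f (deg G u) (deg G w) < g (deg G u) (deg G w)) :
    edgeSum G f < edgeSum G g := by
  classical
  obtain ⟨u, w, huw, hfg⟩ := hlt
  unfold edgeSum
  have hrow : ∀ u, ∀ w ∈ Finset.univ, (if G.Adj u w then f (deg G u) (deg G w) else 0) ≤
      if G.Adj u w then g (deg G u) (deg G w) else 0 := fun u w _ => by
    split_ifs with h
    exacts [hle u w h, le_rfl]
  refine mul_lt_mul_of_pos_left (Finset.sum_lt_sum (fun u _ => Finset.sum_le_sum (hrow u)) ?_)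
    one_half_pos
  exact ⟨u, Finset.mem_univ _, Finset.sum_lt_sum (hrow u) ⟨w, Finset.mem_univ _, by simpa [huw] using hfg⟩⟩

end EdgeSum

/-- Consequence of Theorem 9 noted in the paper: if `δ ≥ 2` and `G` is not a cycle, then
`AG(G) > √2 · ABC(G)`. -/
theorem stmt15 {V : Type*} [Fintype V] (G : SimpleGraph V) (hG : G.Connected)
    (hδ : ∀ v : V, 2 ≤ ndeg G v)
    (hnotcycle : ∀ n : ℕ, IsEmpty (G ≃g SimpleGraph.cycleGraph n)) :
    Real.sqrt 2 * ABC G < AG G := by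
  classical
  have hpos : ∀ u, 0 < deg G u := fun u => Nat.cast_pos.2 (zero_lt_two.trans_le (hδ u))
  obtain ⟨v, hv⟩ : ∃ v, ndeg G v ≠ 2 := by
    by_contra! h
    obtain ⟨n, ⟨e⟩⟩ := exists_iso_cycleGraph_of_degree_eq_two hG h
    exact (hnotcycle n).false e
  obtain ⟨w, hvw⟩ : ∃ w, G.Adj v w :=
    (G.degree_pos_iff_exists_adj v).1 (by have := hδ v; unfold ndeg at this; omega)
  have h4 : deg G v + deg G w ≠ 4 := by
    have := hδ v
    have := hδ w
    unfold deg
    norm_cast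
    omega
  rw [ABC, mul_edgeSum, AG]
  exact edgeSum_lt_edgeSum (fun u w _ => sqrt_two_mul_abc_weight_le_ag_weight (hpos u) (hpos w))
    ⟨v, w, hvw, sqrt_two_mul_abc_weight_lt_ag_weight (hpos v) (hpos w) h4⟩
end
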